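/- arXiv:2406.08281 — 4 statements merged into one kernel-verified Lean document; each statement's English description precedes it below -/
import Mathlib

section
/- Split conformal prediction validity (Proposition 1, CP case). Let n ≥ 1 and let (μ_1, Y_1), …, (μ_{n+1}, Y_{n+1}) be exchangeable random pairs with values in ℝ × ℝ on a probability space. Define the conformity scores V_i = |μ_i − Y_i| for i = 1, …, n+1. Let α ∈ (0,1), set k = ⌈(n+1)(1−α)⌉, assume k ≤ n, and let d be the k-th order statistic of V_1, …, V_n. Then P( μ_{n+1} − d ≤ Y_{n+1} and Y_{n+1} ≤ μ_{n+1} + d ) ≥ 1 − α. -/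
open MeasureTheory

/-- Exchangeability: for every permutation `σ`, the joint law of the permuted
family equals the joint law of the original family. -/
def Exchangeable {Ω E : Type*} [MeasurableSpace Ω] [MeasurableSpace E]
    (P : Measure Ω) {N : ℕ} (Z : Fin N → Ω → E) : Prop :=
  ∀ σ : Equiv.Perm (Fin N),
    Measure.map (fun ω i => Z (σ i) ω) P = Measure.map (fun ω i => Z i ω) P

/-- The `k`-th order statistic (k-th smallest value, 1-indexed, counted with
multiplicity) of the finite family `v`. -/
noncomputable def orderStat {n : ℕ} (v : Fin n → ℝ) (k : ℕ) : ℝ :=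
  (List.insertionSort (· ≤ ·) (List.ofFn v)).getD (k - 1) 0

open Finset

lemma perm_filter_card {m : ℕ} (w : Fin m → ℝ) (σ : Equiv.Perm (Fin m)) (v : ℝ) :
    (univ.filter fun i => w i < v).card
      = (univ.filter fun i => w (σ i) < v).card := by
  rw [← card_map (f := σ.symm.toEmbedding)]
  congr 1
  ext j
  simp only [mem_map, mem_filter, mem_univ, true_and, Equiv.coe_toEmbedding]
  constructor
  · rintro ⟨a, ha, rfl⟩; simpa using ha
  · intro hj; exact ⟨σ j, hj, by simp⟩

lemma orderStat_eq_sort {n : ℕ} (w : Fin n → ℝ) (k : ℕ) (hk1 : 1 ≤ k) (hkn : k ≤ n) :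
    orderStat w k = w (Tuple.sort w ⟨k - 1, by omega⟩) := by
  have h1 : List.insertionSort (· ≤ ·) (List.ofFn w) = List.ofFn (w ∘ Tuple.sort w) := by
    refine (fun h1 h2 h3 => List.Perm.eq_of_pairwise' (r := (· ≤ ·)) h2 h3 h1) ?_ ?_ ?_
    · exact (List.perm_insertionSort _ _).trans ((Tuple.sort w).ofFn_comp_perm w).symm
    · exact List.pairwise_insertionSort _ _
    · exact (Tuple.monotone_sort w).sortedLE_ofFn.pairwise
  rw [orderStat, h1]
  rw [List.getD_eq_getElem _ _ (by simp; omega)]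
  simp [List.getElem_ofFn]

lemma le_orderStat_iff {n : ℕ} (w : Fin n → ℝ) (v : ℝ) (k : ℕ) (hk1 : 1 ≤ k) (hkn : k ≤ n) :
    v ≤ orderStat w k ↔ (univ.filter fun i => w i < v).card < k := by
  rw [orderStat_eq_sort w k hk1 hkn]
  set σ := Tuple.sort w with hσ
  have hmono := Tuple.monotone_sort w
  rw [perm_filter_card w σ v]
  constructor
  · intro h
    have hsub : (univ.filter fun i => w (σ i) < v) ⊆ Iio (⟨k - 1, by omega⟩ : Fin n) := by
      intro i hi
      simp only [mem_filter, mem_univ, true_and] at hi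
      rw [mem_Iio]
      by_contra hge
      push_neg at hge
      exact absurd (le_trans h (hmono hge)) (not_le.2 hi)
    calc (univ.filter fun i => w (σ i) < v).card ≤ (Iio (⟨k - 1, by omega⟩ : Fin n)).card :=
          card_le_card hsub
      _ = k - 1 := by rw [Fin.card_Iio]
      _ < k := by omega
  · intro h
    by_contra hc
    push_neg at hc
    have hsub : Iic (⟨k - 1, by omega⟩ : Fin n) ⊆ (univ.filter fun i => w (σ i) < v) := by
      intro i hi
      rw [mem_Iic] at hi
      simp only [mem_filter, mem_univ, true_and]
      exact lt_of_le_of_lt (hmono hi) hc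
    have := card_le_card hsub
    simp only [Fin.card_Iic, Fin.val_mk] at this
    omega

lemma count_pigeonhole {m : ℕ} (k : ℕ) (hk : k ≤ m) (w : Fin m → ℝ) :
    k ≤ (univ.filter fun j => (univ.filter fun i => w i < w j).card < k).card := by
  rcases Nat.eq_zero_or_pos k with rfl | hk1
  · exact Nat.zero_le _
  set σ := Tuple.sort w with hσ
  have hmono := Tuple.monotone_sort w
  have hsub : (Iic (⟨k - 1, by omega⟩ : Fin m)).map σ.toEmbedding ⊆
      univ.filter fun j => (univ.filter fun i => w i < w j).card < k := by
    intro j hj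
    simp only [mem_map, Equiv.coe_toEmbedding, mem_Iic] at hj
    obtain ⟨j', hj', rfl⟩ := hj
    simp only [mem_filter, mem_univ, true_and]
    rw [perm_filter_card w σ]
    have hle : (univ.filter fun i => w (σ i) < w (σ j')).card ≤ (Iio j').card := by
      apply card_le_card
      intro i hi
      simp only [mem_filter, mem_univ, true_and] at hi
      rw [mem_Iio]
      by_contra hge
      push_neg at hge
      exact absurd (hmono hge) (not_le.2 hi)
    rw [Fin.card_Iio] at hle
    have hj'k : (j' : ℕ) ≤ k - 1 := hj'
    omega
  calc k = ((Iic (⟨k - 1, by omega⟩ : Fin m)).map σ.toEmbedding).card := by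
        simp only [card_map, Fin.card_Iic, Fin.val_mk]; omega
    _ ≤ _ := card_le_card hsub

open scoped ENNReal

/-- Split conformal prediction validity (Proposition 1, CP case). -/
theorem split_conformal_prediction_validity
    {Ω : Type*} [MeasurableSpace Ω] (P : Measure Ω) [IsProbabilityMeasure P]
    (n : ℕ) (hn : 1 ≤ n)
    (μ Y : Fin (n + 1) → Ω → ℝ)
    (hμ : ∀ i, Measurable (μ i)) (hY : ∀ i, Measurable (Y i))
    (hexch : Exchangeable P (fun i ω => (μ i ω, Y i ω)))
    (V : Fin (n + 1) → Ω → ℝ)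
    (hV : ∀ i ω, V i ω = |μ i ω - Y i ω|)
    (α : ℝ) (hα : α ∈ Set.Ioo (0 : ℝ) 1)
    (k : ℕ) (hk : k = ⌈((n : ℝ) + 1) * (1 - α)⌉₊) (hkn : k ≤ n)
    (d : Ω → ℝ)
    (hd : ∀ ω, d ω = orderStat (fun i : Fin n => V i.castSucc ω) k) :
    ENNReal.ofReal (1 - α) ≤
      P {ω | μ (Fin.last n) ω - d ω ≤ Y (Fin.last n) ω ∧
             Y (Fin.last n) ω ≤ μ (Fin.last n) ω + d ω} := by
  have hexch' : ∀ σ : Equiv.Perm (Fin (n+1)),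
      Measure.map (fun ω i => (μ (σ i) ω, Y (σ i) ω)) P
        = Measure.map (fun ω i => (μ i ω, Y i ω)) P := fun σ => hexch σ
  clear hexch
  classical
  obtain ⟨hα0, hα1⟩ := hα
  have hk1 : 1 ≤ k := by
    rw [hk]
    refine Nat.one_le_iff_ne_zero.2 ?_
    simp only [ne_eq, Nat.ceil_eq_zero, not_le]
    exact mul_pos (by positivity) (by linarith)
  -- setup
  set W : Ω → (Fin (n+1) → ℝ × ℝ) := fun ω i => (μ i ω, Y i ω) with hW_def
  set f : ℝ × ℝ → ℝ := fun p => |p.1 - p.2| with hf_def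
  have hf : Measurable f := (measurable_fst.sub measurable_snd).abs
  have hW : Measurable W := measurable_pi_lambda _ (fun i => (hμ i).prodMk (hY i))
  set S : Fin (n+1) → Set (Fin (n+1) → ℝ × ℝ) :=
    fun j => {z | (Finset.univ.filter fun i => f (z i) < f (z j)).card < k} with hS_def
  have hg : ∀ j, Measurable fun z : Fin (n+1) → ℝ × ℝ =>
      (Finset.univ.filter fun i => f (z i) < f (z j)).card := by
    intro j
    simp only [Finset.card_filter]
    apply Finset.measurable_sum
    intro i _
    exact Measurable.ite
      (measurableSet_lt (hf.comp (measurable_pi_apply i)) (hf.comp (measurable_pi_apply j)))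
      measurable_const measurable_const
  have hS : ∀ j, MeasurableSet (S j) := by
    intro j
    have h0 : S j = (fun z : Fin (n+1) → ℝ × ℝ =>
        (Finset.univ.filter fun i => f (z i) < f (z j)).card) ⁻¹' (Set.Iio k) := rfl
    rw [h0]
    exact hg j MeasurableSet.of_discrete
  -- equal probabilities
  have hPeq : ∀ j, P (W ⁻¹' S j) = P (W ⁻¹' S (Fin.last n)) := by
    intro j
    have hperm : Measurable fun z : Fin (n+1) → ℝ × ℝ =>
        fun i => z (Equiv.swap j (Fin.last n) i) :=
      measurable_pi_lambda _ (fun i => measurable_pi_apply _)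
    have hSeq : S j = (fun z : Fin (n+1) → ℝ × ℝ =>
        fun i => z (Equiv.swap j (Fin.last n) i)) ⁻¹' S (Fin.last n) := by
      ext z
      simp only [hS_def, Set.mem_preimage, Set.mem_setOf_eq]
      have h2 : (Finset.univ.filter fun i =>
            f (z (Equiv.swap j (Fin.last n) i)) < f (z (Equiv.swap j (Fin.last n) (Fin.last n)))).card
          = (Finset.univ.filter fun i => f (z i) < f (z j)).card := by
        rw [Equiv.swap_apply_right]
        exact (perm_filter_card (fun i => f (z i)) (Equiv.swap j (Fin.last n)) (f (z j))).symm
      omega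
    rw [hSeq, ← Set.preimage_comp]
    have hcomp : ((fun z : Fin (n+1) → ℝ × ℝ => fun i => z (Equiv.swap j (Fin.last n) i)) ∘ W)
        = fun ω i => (μ (Equiv.swap j (Fin.last n) i) ω, Y (Equiv.swap j (Fin.last n) i) ω) := rfl
    rw [← Measure.map_apply (hperm.comp hW) (hS (Fin.last n)), hcomp,
      hexch' (Equiv.swap j (Fin.last n)), Measure.map_apply hW (hS (Fin.last n))]
  -- pointwise count bound
  have hpoint : ∀ ω, (k : ℝ≥0∞) ≤ ∑ j : Fin (n+1), (W ⁻¹' S j).indicator (fun _ => 1) ω := by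
    intro ω
    have hcnt := count_pigeonhole k (by omega) (fun i => f (W ω i))
    have hfil : (Finset.univ.filter fun j => ω ∈ W ⁻¹' S j)
        = (Finset.univ.filter fun j : Fin (n+1) =>
            (Finset.univ.filter fun i => f (W ω i) < f (W ω j)).card < k) := by
      apply Finset.filter_congr
      intro j _
      simp [hS_def]
    have hval : ∑ j : Fin (n+1), (W ⁻¹' S j).indicator (fun _ => (1:ℝ≥0∞)) ω
        = ((Finset.univ.filter fun j => ω ∈ W ⁻¹' S j).card : ℝ≥0∞) := by
      rw [Finset.card_filter]
      push_cast
      refine Finset.sum_congr rfl fun j _ => ?_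
      by_cases hj : ω ∈ W ⁻¹' S j <;> simp [hj, Set.indicator_apply]
    rw [hval, hfil]
    exact_mod_cast hcnt
  -- sum bound
  have hsum : (k : ℝ≥0∞) ≤ ∑ j : Fin (n+1), P (W ⁻¹' S j) := by
    have h1 : ∀ j : Fin (n+1), P (W ⁻¹' S j)
        = ∫⁻ ω, (W ⁻¹' S j).indicator (fun _ => 1) ω ∂P := by
      intro j
      rw [lintegral_indicator (hW (hS j))]
      simp
    calc (k : ℝ≥0∞) = ∫⁻ _, (k : ℝ≥0∞) ∂P := by simp
      _ ≤ ∫⁻ ω, ∑ j : Fin (n+1), (W ⁻¹' S j).indicator (fun _ => 1) ω ∂P :=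
          lintegral_mono hpoint
      _ = ∑ j : Fin (n+1), ∫⁻ ω, (W ⁻¹' S j).indicator (fun _ => 1) ω ∂P :=
          lintegral_finset_sum _ (fun j _ => (measurable_one.indicator (hW (hS j))))
      _ = ∑ j : Fin (n+1), P (W ⁻¹' S j) := by simp_rw [h1]
  rw [Finset.sum_congr rfl (fun j _ => hPeq j), Finset.sum_const, Finset.card_univ,
    Fintype.card_fin, nsmul_eq_mul] at hsum
  -- target set equality
  have hset : {ω | μ (Fin.last n) ω - d ω ≤ Y (Fin.last n) ω ∧
             Y (Fin.last n) ω ≤ μ (Fin.last n) ω + d ω} = W ⁻¹' S (Fin.last n) := by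
    ext ω
    simp only [Set.mem_setOf_eq, Set.mem_preimage, hS_def]
    have habs : (μ (Fin.last n) ω - d ω ≤ Y (Fin.last n) ω ∧
        Y (Fin.last n) ω ≤ μ (Fin.last n) ω + d ω)
          ↔ |μ (Fin.last n) ω - Y (Fin.last n) ω| ≤ d ω := by
      rw [abs_le]; constructor <;> (rintro ⟨h1, h2⟩; constructor <;> linarith)
    rw [habs, ← hV, hd, le_orderStat_iff _ _ k hk1 hkn]
    have hfV : ∀ i, f (W ω i) = V i ω := fun i => (hV i ω).symm
    have hcount : (Finset.univ.filter fun i : Fin (n+1) => f (W ω i) < f (W ω (Fin.last n))).card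
        = (Finset.univ.filter fun i : Fin n => V i.castSucc ω < V (Fin.last n) ω).card := by
      simp only [Finset.card_filter]
      rw [Fin.sum_univ_castSucc]
      simp [hfV]
    constructor
    · intro h; omega
    · intro h; omega
  rw [hset]
  -- final arithmetic
  have hkey : ENNReal.ofReal (1 - α) * (((n:ℕ) + 1 : ℕ) : ℝ≥0∞) ≤ (k : ℝ≥0∞) := by
    have hle : ((n : ℝ) + 1) * (1 - α) ≤ k := by rw [hk]; exact Nat.le_ceil _
    calc ENNReal.ofReal (1 - α) * (((n:ℕ) + 1 : ℕ) : ℝ≥0∞)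
        = ENNReal.ofReal ((1 - α) * ((n : ℝ) + 1)) := by
          rw [ENNReal.ofReal_mul (by linarith), ← ENNReal.ofReal_natCast (n+1)]
          push_cast
          ring_nf
      _ ≤ ENNReal.ofReal (k : ℝ) := ENNReal.ofReal_le_ofReal (by linarith)
      _ = (k : ℝ≥0∞) := ENNReal.ofReal_natCast k
  have hne : (((n:ℕ) + 1 : ℕ) : ℝ≥0∞) ≠ 0 := by exact_mod_cast Nat.succ_ne_zero n
  have hfin : (((n:ℕ) + 1 : ℕ) : ℝ≥0∞) ≠ ∞ := ENNReal.natCast_ne_top _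
  have h2 : ENNReal.ofReal (1 - α) * (((n:ℕ) + 1 : ℕ) : ℝ≥0∞)
      ≤ P (W ⁻¹' S (Fin.last n)) * (((n:ℕ) + 1 : ℕ) : ℝ≥0∞) :=
    le_trans hkey (le_trans hsum (le_of_eq (mul_comm _ _)))
  exact (ENNReal.mul_le_mul_iff_left hne hfin).1 h2
end

section
/- Conformalized quantile regression validity (Proposition 1, CQR case). Let n ≥ 1 and let (L_1, U_1, Y_1), …, (L_{n+1}, U_{n+1}, Y_{n+1}) be exchangeable random triples with values in ℝ³ on a probability space. Define the conformity scores V_i = max{ L_i − Y_i, Y_i − U_i } for i = 1, …, n+1. Let α ∈ (0,1), set k = ⌈(n+1)(1−α)⌉, assume k ≤ n, and let d be the k-th order statistic of V_1, …, V_n. Then P( L_{n+1} − d ≤ Y_{n+1} and Y_{n+1} ≤ U_{n+1} + d ) ≥ 1 − α. -/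
open MeasureTheory

lemma sorted_getD_iff_countP {l : List ℝ} (hl : l.Pairwise (· ≤ ·)) (p : ℝ → Bool)
    (hp : ∀ a b : ℝ, a ≤ b → p b → p a) {k : ℕ} (hk1 : 1 ≤ k) (hkl : k ≤ l.length) :
    p (l.getD (k - 1) 0) ↔ k ≤ l.countP p := by
  have hi : k - 1 < l.length := by omega
  rw [List.getD_eq_getElem l 0 hi]
  constructor
  · intro hpk
    have htake : (l.take k).countP p = (l.take k).length := by
      rw [List.countP_eq_length]
      intro a ha
      rw [List.mem_take_iff_getElem] at ha
      obtain ⟨j, hj, rfl⟩ := ha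
      have hjl : j < l.length := by omega
      refine hp _ _ ?_ hpk
      have := hl.rel_get_of_le (a := ⟨j, hjl⟩) (b := ⟨k - 1, hi⟩) (by simp; omega)
      simpa using this
    have hlen : (l.take k).length = k := by rw [List.length_take]; omega
    calc k = (l.take k).countP p := by rw [htake, hlen]
    _ ≤ l.countP p := by
        conv_rhs => rw [← List.take_append_drop k l]
        rw [List.countP_append]; omega
  · intro hcount
    by_contra hpk
    have hdrop : (l.drop (k-1)).countP p = 0 := by
      rw [List.countP_eq_zero]
      intro a ha
      rw [List.mem_drop_iff_getElem] at ha
      obtain ⟨j, hj, rfl⟩ := ha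
      intro hpa
      exact hpk (hp _ _ (by
        have := hl.rel_get_of_le (a := ⟨k-1, hi⟩) (b := ⟨k-1+j, by omega⟩) (by simp)
        simpa using this) hpa)
    have : l.countP p ≤ k - 1 := by
      conv_lhs => rw [← List.take_append_drop (k-1) l]
      rw [List.countP_append, hdrop]
      have := List.countP_le_length (p := p) (l := l.take (k-1))
      rw [List.length_take] at this
      omega
    omega

lemma countP_ofFn_eq_card {N : ℕ} (v : Fin N → ℝ) (p : ℝ → Bool) :
    (List.ofFn v).countP (fun a => p a) = (Finset.univ.filter fun i => p (v i)).card := by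
  rw [List.ofFn_eq_map, List.countP_map, List.countP_eq_length_filter]
  have : (Finset.univ.filter fun i => p (v i)) =
      ⟨(List.finRange N).filter ((fun a => p a) ∘ v),
        (List.nodup_finRange N).filter _⟩ := by
    rw [Fin.univ_def]
    ext x
    simp [Finset.mem_filter, List.mem_filter, Finset.mem_def]
  rw [this]
  rfl

lemma orderStat_iff_card {N : ℕ} (v : Fin N → ℝ) (p : ℝ → Bool)
    (hp : ∀ a b : ℝ, a ≤ b → p b → p a) {k : ℕ} (hk1 : 1 ≤ k) (hkl : k ≤ N) :
    p (orderStat v k) ↔ k ≤ (Finset.univ.filter fun i => p (v i)).card := by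
  have hperm := List.perm_insertionSort (· ≤ ·) (List.ofFn v)
  have hlen : (List.insertionSort (· ≤ ·) (List.ofFn v)).length = N := by
    rw [List.length_insertionSort, List.length_ofFn]
  rw [orderStat, sorted_getD_iff_countP (List.pairwise_insertionSort _ _) p hp hk1 (by omega),
    hperm.countP_eq, countP_ofFn_eq_card]

lemma orderStat_comp_perm {N : ℕ} (v : Fin N → ℝ) (σ : Equiv.Perm (Fin N)) (k : ℕ) :
    orderStat (v ∘ σ) k = orderStat v k := by
  have hperm : (List.ofFn (v ∘ σ)).Perm (List.ofFn v) := by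
    rw [List.ofFn_eq_map, List.ofFn_eq_map, show (v ∘ σ) = fun i => v (σ i) from rfl]
    have h1 : (List.finRange N).map (fun i => v (σ i)) = ((List.finRange N).map σ).map v := by
      simp [List.map_map]
    rw [h1]
    refine List.Perm.map v ?_
    refine List.perm_of_nodup_nodup_toFinset_eq
      ((List.nodup_finRange N).map σ.injective) (List.nodup_finRange N) ?_
    ext x
    simp
    exact ⟨σ.symm x, by simp⟩
  unfold orderStat
  rw [List.Perm.eq_of_pairwise'
    (List.pairwise_insertionSort _ _) (List.pairwise_insertionSort _ _)
    ((List.perm_insertionSort _ _).trans (hperm.trans (List.perm_insertionSort _ _).symm))]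

lemma measurable_card_aux {N : ℕ} (t : ℝ) :
    Measurable fun v : Fin N → ℝ => (Finset.univ.filter fun i => v i ≤ t).card := by
  have : (fun v : Fin N → ℝ => (Finset.univ.filter fun i => v i ≤ t).card) =
      fun v => ∑ i : Fin N, if v i ≤ t then 1 else 0 := by
    ext v; rw [Finset.card_filter]
  rw [this]
  exact Finset.measurable_sum _ fun i _ =>
    Measurable.ite (measurableSet_le (measurable_pi_apply i) measurable_const)
      measurable_const measurable_const

lemma measurable_orderStat {N : ℕ} {k : ℕ} (hk1 : 1 ≤ k) (hkl : k ≤ N) :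
    Measurable fun v : Fin N → ℝ => orderStat v k := by
  apply measurable_of_Iic
  intro t
  have hset : (fun v : Fin N → ℝ => orderStat v k) ⁻¹' Set.Iic t =
      (fun v : Fin N → ℝ => (Finset.univ.filter fun i => v i ≤ t).card) ⁻¹' Set.Ici k := by
    ext v
    have := orderStat_iff_card v (fun a => decide (a ≤ t))
      (fun a b hab hb => by simpa using le_trans hab (by simpa using hb)) hk1 hkl
    simpa using this
  rw [hset]
  exact measurable_card_aux t (by trivial)

/-- Conformalized quantile regression validity (Proposition 1, CQR case). -/
theorem conformalized_quantile_regression_validity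
    {Ω : Type*} [MeasurableSpace Ω] (P : Measure Ω) [IsProbabilityMeasure P]
    (n : ℕ) (hn : 1 ≤ n)
    (L U Y : Fin (n + 1) → Ω → ℝ)
    (hL : ∀ i, Measurable (L i)) (hU : ∀ i, Measurable (U i))
    (hY : ∀ i, Measurable (Y i))
    (hexch : Exchangeable P (fun i ω => (L i ω, U i ω, Y i ω)))
    (V : Fin (n + 1) → Ω → ℝ)
    (hV : ∀ i ω, V i ω = max (L i ω - Y i ω) (Y i ω - U i ω))
    (α : ℝ) (hα : α ∈ Set.Ioo (0 : ℝ) 1)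
    (k : ℕ) (hk : k = ⌈((n : ℝ) + 1) * (1 - α)⌉₊) (hkn : k ≤ n)
    (d : Ω → ℝ)
    (hd : ∀ ω, d ω = orderStat (fun i : Fin n => V i.castSucc ω) k) :
    ENNReal.ofReal (1 - α) ≤
      P {ω | L (Fin.last n) ω - d ω ≤ Y (Fin.last n) ω ∧
             Y (Fin.last n) ω ≤ U (Fin.last n) ω + d ω} := by
  obtain ⟨hα0, hα1⟩ := hα
  -- k ≥ 1
  have hk1 : 1 ≤ k := by
    rw [hk]
    have hpos : (0:ℝ) < ((n:ℝ)+1) * (1-α) := mul_pos (by positivity) (by linarith)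
    exact Nat.one_le_iff_ne_zero.mpr (Nat.ceil_pos.mpr hpos).ne'
  -- setup
  set score : ℝ × ℝ × ℝ → ℝ := fun p => max (p.1 - p.2.2) (p.2.2 - p.2.1) with hscore_def
  have hscore_meas : Measurable score :=
    ((measurable_fst.sub measurable_snd.snd).max (measurable_snd.snd.sub measurable_snd.fst))
  set Z : Fin (n+1) → Ω → ℝ × ℝ × ℝ := fun i ω => (L i ω, U i ω, Y i ω) with hZ_def
  have hZmeas : ∀ i, Measurable (Z i) := fun i => ((hL i).prod ((hU i).prod (hY i)))
  have hscoreZ : ∀ i ω, V i ω = score (Z i ω) := fun i ω => by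
    rw [hV]
  set D : Ω → ℝ := fun ω => orderStat (fun i => V i ω) k with hD_def
  -- downward-closed predicates
  have hple : ∀ t : ℝ, ∀ a b : ℝ, a ≤ b → decide (b ≤ t) → decide (a ≤ t) := by
    intro t a b hab hb; simpa using le_trans hab (by simpa using hb)
  have hplt : ∀ t : ℝ, ∀ a b : ℝ, a ≤ b → decide (b < t) → decide (a < t) := by
    intro t a b hab hb; simpa using lt_of_le_of_lt hab (by simpa using hb)
  -- step: target set equals {ω | V (last n) ω ≤ D ω}
  have hset : {ω | L (Fin.last n) ω - d ω ≤ Y (Fin.last n) ω ∧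
             Y (Fin.last n) ω ≤ U (Fin.last n) ω + d ω} = {ω | V (Fin.last n) ω ≤ D ω} := by
    ext ω
    simp only [Set.mem_setOf_eq]
    have h1 : (L (Fin.last n) ω - d ω ≤ Y (Fin.last n) ω ∧
        Y (Fin.last n) ω ≤ U (Fin.last n) ω + d ω) ↔ V (Fin.last n) ω ≤ d ω := by
      rw [hV, max_le_iff]
      constructor <;> (rintro ⟨ha, hb⟩; exact ⟨by linarith, by linarith⟩)
    rw [h1]
    set v := V (Fin.last n) ω with hv_def
    -- compare counts of strict inequalities
    have hcard : (Finset.univ.filter fun i : Fin n =>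
          (fun j => V j ω) i.castSucc < v).card =
        (Finset.univ.filter fun i : Fin (n+1) => V i ω < v).card := by
      classical
      rw [Finset.card_filter, Finset.card_filter, Fin.sum_univ_castSucc
        (f := fun i : Fin (n+1) => if V i ω < v then 1 else 0)]
      simp [hv_def]
    have hA := orderStat_iff_card (fun i : Fin n => V i.castSucc ω)
      (fun a => decide (a < v)) (hplt v) hk1 hkn
    have hB := orderStat_iff_card (fun i : Fin (n+1) => V i ω)
      (fun a => decide (a < v)) (hplt v) hk1 (by omega)
    simp only [decide_eq_true_eq] at hA hB
    constructor
    · intro h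
      rw [hd] at h
      rw [hD_def]
      by_contra hlt
      push_neg at hlt
      have := hB.mp hlt
      rw [← hcard] at this
      exact absurd (hA.mpr this) (not_lt.mpr h)
    · intro h
      rw [hd]
      rw [hD_def] at h
      by_contra hlt
      push_neg at hlt
      have := hA.mp hlt
      rw [hcard] at this
      exact absurd (hB.mpr this) (not_lt.mpr h)
  rw [hset]
  -- the events E j
  set S : Fin (n+1) → Set (Fin (n+1) → ℝ × ℝ × ℝ) := fun j =>
    {z | score (z j) ≤ orderStat (fun i => score (z i)) k} with hS_def
  have hSmeas : ∀ j, MeasurableSet (S j) := by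
    intro j
    exact measurableSet_le (hscore_meas.comp (measurable_pi_apply j))
      ((measurable_orderStat hk1 (by omega)).comp
        (measurable_pi_lambda _ fun i => hscore_meas.comp (measurable_pi_apply i)))
  set E : Fin (n+1) → Set Ω := fun j => {ω | V j ω ≤ D ω} with hE_def
  have hpre : ∀ j, (fun ω i => Z i ω) ⁻¹' S j = E j := by
    intro j
    ext ω
    simp only [hS_def, hE_def, Set.mem_preimage, Set.mem_setOf_eq, hD_def]
    rw [← hscoreZ]
    have : (fun i => score (Z i ω)) = fun i => V i ω := by
      ext i; rw [← hscoreZ]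
    rw [this]
  have hZpi : Measurable (fun ω (i : Fin (n+1)) => Z i ω) :=
    measurable_pi_lambda _ fun i => hZmeas i
  have hEmeas : ∀ j, MeasurableSet (E j) := by
    intro j
    rw [← hpre j]
    exact hZpi (hSmeas j)
  -- exchangeability: P (E j) = P (E (last n))
  have hEeq : ∀ j, P (E j) = P (E (Fin.last n)) := by
    intro j
    set σ : Equiv.Perm (Fin (n+1)) := Equiv.swap j (Fin.last n) with hσ_def
    have hZσpi : Measurable (fun ω (i : Fin (n+1)) => Z (σ i) ω) :=
      measurable_pi_lambda _ fun i => hZmeas (σ i)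
    have hmap := hexch σ
    have h1 : Measure.map (fun ω (i : Fin (n+1)) => Z i ω) P (S (Fin.last n)) =
        P (E (Fin.last n)) := by
      rw [Measure.map_apply hZpi (hSmeas _), hpre]
    have h2 : Measure.map (fun ω (i : Fin (n+1)) => Z (σ i) ω) P (S (Fin.last n)) =
        P (E j) := by
      rw [Measure.map_apply hZσpi (hSmeas _)]
      congr 1
      ext ω
      simp only [hS_def, hE_def, Set.mem_preimage, Set.mem_setOf_eq, hD_def]
      have hσlast : σ (Fin.last n) = j := Equiv.swap_apply_right _ _
      have hperm : (fun i => score (Z (σ i) ω)) = (fun i => V i ω) ∘ σ := by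
        ext i; simp only [Function.comp_apply]; rw [← hscoreZ]
      rw [hσlast, hperm, orderStat_comp_perm, ← hscoreZ]
    rw [← h1, ← hmap, h2]
  -- pointwise count bound
  have hpoint : ∀ ω, (k : ENNReal) ≤ ∑ j, (E j).indicator (fun _ => 1) ω := by
    intro ω
    have hcount : k ≤ (Finset.univ.filter fun j : Fin (n+1) => V j ω ≤ D ω).card := by
      have h := orderStat_iff_card (fun i : Fin (n+1) => V i ω)
        (fun a => decide (a ≤ D ω)) (hple (D ω)) hk1 (by omega)
      simp only [decide_eq_true_eq] at h
      exact h.mp le_rfl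
    calc (k : ENNReal) ≤
        ((Finset.univ.filter fun j : Fin (n+1) => V j ω ≤ D ω).card : ENNReal) := by
          exact_mod_cast hcount
      _ = ∑ j, (E j).indicator (fun _ => 1) ω := by
          rw [Finset.card_filter]
          push_cast
          refine Finset.sum_congr rfl fun j _ => ?_
          by_cases hmem : V j ω ≤ D ω <;>
            simp [Set.indicator_apply, hE_def, Set.mem_setOf_eq, hmem]
  -- integrate
  have hsum : (k : ENNReal) ≤ (n + 1 : ENNReal) * P (E (Fin.last n)) := by
    calc (k : ENNReal) = ∫⁻ _, (k : ENNReal) ∂P := by simp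
      _ ≤ ∫⁻ ω, ∑ j, (E j).indicator (fun _ => 1) ω ∂P := lintegral_mono hpoint
      _ = ∑ j, ∫⁻ ω, (E j).indicator (fun _ => 1) ω ∂P :=
          lintegral_finset_sum _ fun j _ => (measurable_const.indicator (hEmeas j))
      _ = ∑ j : Fin (n+1), P (E j) := by
          refine Finset.sum_congr rfl fun j _ => ?_
          simp [lintegral_indicator (hEmeas j)]
      _ = ∑ _j : Fin (n+1), P (E (Fin.last n)) := Finset.sum_congr rfl fun j _ => hEeq j
      _ = (n + 1 : ENNReal) * P (E (Fin.last n)) := by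
          rw [Finset.sum_const]
          simp [mul_comm]
  -- conclude
  have hc0 : ((n : ENNReal) + 1) ≠ 0 := by simp
  have hct : ((n : ENNReal) + 1) ≠ ⊤ := by simp
  have hmul : ENNReal.ofReal (1 - α) * ((n : ENNReal) + 1) ≤ (k : ENNReal) := by
    have h1 : ((n : ENNReal) + 1) = ENNReal.ofReal ((n : ℝ) + 1) := by
      rw [ENNReal.ofReal_add (by positivity) zero_le_one]
      simp
    rw [h1, ← ENNReal.ofReal_mul (by linarith)]
    have h2 : (1 - α) * ((n : ℝ) + 1) ≤ (k : ℝ) := by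
      rw [hk, mul_comm]
      exact Nat.le_ceil _
    calc ENNReal.ofReal ((1 - α) * ((n : ℝ) + 1)) ≤ ENNReal.ofReal (k : ℝ) :=
          ENNReal.ofReal_le_ofReal h2
      _ = (k : ENNReal) := ENNReal.ofReal_natCast k
  have hdiv : ENNReal.ofReal (1 - α) ≤ (k : ENNReal) / ((n : ENNReal) + 1) :=
    (ENNReal.le_div_iff_mul_le (Or.inl hc0) (Or.inl hct)).mpr hmul
  have hdiv2 : (k : ENNReal) / ((n : ENNReal) + 1) ≤ P (E (Fin.last n)) := by
    have h := ENNReal.div_le_div_right hsum ((n : ENNReal) + 1)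
    rwa [mul_comm, mul_div_assoc, ENNReal.div_self hc0 hct, mul_one] at h
  exact le_trans hdiv hdiv2
end

section
/- Error-reweighted conformalized quantile regression validity (Proposition 1, CQR-ERC case). Let n ≥ 1 and let (L_1, U_1, Y_1), …, (L_{n+1}, U_{n+1}, Y_{n+1}) be exchangeable random triples with values in ℝ³ on a probability space, and assume that almost surely L_i < U_i for every i. Define the reweighted conformity scores V_i = max{ (L_i − Y_i)/(U_i − L_i), (Y_i − U_i)/(U_i − L_i) } for i = 1, …, n+1. Let α ∈ (0,1), set k = ⌈(n+1)(1−α)⌉, assume k ≤ n, and let d be the k-th order statistic of V_1, …, V_n. Then P( L_{n+1} − d·(U_{n+1} − L_{n+1}) ≤ Y_{n+1} and Y_{n+1} ≤ U_{n+1} + d·(U_{n+1} − L_{n+1}) ) ≥ 1 − α. -/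
open MeasureTheory

lemma countP_ofFn {n : ℕ} (v : Fin n → ℝ) (q : ℝ → Bool) :
    (List.ofFn v).countP q = (Finset.univ.filter (fun i => q (v i))).card := by
  induction n with
  | zero => simp
  | succ m ih =>
    rw [List.ofFn_succ, List.countP_cons, ih (fun i => v i.succ)]
    rw [Finset.card_filter, Finset.card_filter, Fin.sum_univ_succ]
    omega

lemma sorted_getD_iff {l : List ℝ} (hs : l.Pairwise (· ≤ ·)) {k : ℕ}
    (hk1 : 1 ≤ k) (hkl : k ≤ l.length) (p : ℝ → Prop) [DecidablePred p]
    (hp : ∀ ⦃a b : ℝ⦄, a ≤ b → p b → p a) :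
    p (l.getD (k-1) 0) ↔ k ≤ l.countP (fun x => decide (p x)) := by
  have hlt : k - 1 < l.length := by omega
  rw [List.getD_eq_getElem l 0 hlt]
  have hpair := List.pairwise_iff_getElem.mp hs
  constructor
  · intro h
    have htake : (l.take k).countP (fun x => decide (p x)) = k := by
      rw [List.countP_eq_length.mpr, List.length_take]
      · omega
      · intro a ha
        obtain ⟨i, hi, rfl⟩ := List.mem_iff_getElem.mp ha
        rw [List.getElem_take]
        have hil : i < l.length := by
          have := hi; rw [List.length_take] at this; omega
        simp only [decide_eq_true_eq]
        rcases eq_or_lt_of_le (show i ≤ k - 1 by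
          have := hi; rw [List.length_take] at this; omega) with he | hl2
        · subst he; exact h
        · exact hp (hpair i (k-1) hil hlt hl2) h
    have : l.countP (fun x => decide (p x)) =
        (l.take k).countP (fun x => decide (p x)) + (l.drop k).countP (fun x => decide (p x)) := by
      conv_lhs => rw [← List.take_append_drop k l]
      rw [List.countP_append]
    omega
  · intro h
    by_contra hc
    have hdrop : (l.drop (k-1)).countP (fun x => decide (p x)) = 0 := by
      rw [List.countP_eq_zero]
      intro a ha
      obtain ⟨i, hi, rfl⟩ := List.mem_iff_getElem.mp ha
      rw [List.getElem_drop]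
      simp only [decide_eq_true_eq]
      intro hpa
      have hil : k - 1 + i < l.length := by
        have := hi; rw [List.length_drop] at this; omega
      rcases Nat.eq_zero_or_pos i with he | hl2
      · subst he; simp at hpa; exact hc (by simpa using hpa)
      · exact hc (hp (hpair (k-1) (k-1+i) hlt hil (by omega)) hpa)
    have heq : l.countP (fun x => decide (p x)) =
        (l.take (k-1)).countP (fun x => decide (p x)) + (l.drop (k-1)).countP (fun x => decide (p x)) := by
      conv_lhs => rw [← List.take_append_drop (k-1) l]
      rw [List.countP_append]
    have hle := List.countP_le_length (p := fun x => decide (p x)) (l := l.take (k-1))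
    rw [List.length_take] at hle
    omega

lemma orderStat_le_iff {n : ℕ} (v : Fin n → ℝ) {k : ℕ} (hk1 : 1 ≤ k) (hkn : k ≤ n) (t : ℝ) :
    orderStat v k ≤ t ↔ k ≤ (Finset.univ.filter fun i => v i ≤ t).card := by
  unfold orderStat
  rw [sorted_getD_iff (List.pairwise_insertionSort _ _) hk1
    (by rw [List.length_insertionSort, List.length_ofFn]; exact hkn) (fun x => x ≤ t)
    (fun a b hab hb => le_trans hab hb)]
  rw [(List.perm_insertionSort _ _).countP_eq, countP_ofFn]
  simp

lemma orderStat_lt_iff {n : ℕ} (v : Fin n → ℝ) {k : ℕ} (hk1 : 1 ≤ k) (hkn : k ≤ n) (t : ℝ) :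
    orderStat v k < t ↔ k ≤ (Finset.univ.filter fun i => v i < t).card := by
  unfold orderStat
  rw [sorted_getD_iff (List.pairwise_insertionSort _ _) hk1
    (by rw [List.length_insertionSort, List.length_ofFn]; exact hkn) (fun x => x < t)
    (fun a b hab hb => lt_of_le_of_lt hab hb)]
  rw [(List.perm_insertionSort _ _).countP_eq, countP_ofFn]
  simp

open ENNReal

lemma key_count {N : ℕ} (w : Fin N → ℝ) {k : ℕ} (hk : k ≤ N) :
    k ≤ (Finset.univ.filter fun j : Fin N =>
          (Finset.univ.filter fun i => w i < w j).card < k).card := by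
  classical
  set key : Fin N → ℝ ×ₗ Fin N := fun j => toLex (w j, j) with hkey
  set c' : Fin N → ℕ := fun j => (Finset.univ.filter fun i => key i < key j).card with hc'
  have hkeyinj : Function.Injective key := by
    intro i j h
    have := congrArg (fun x => (ofLex x).2) h
    simpa [hkey] using this
  have hmono : ∀ i j, key i < key j → c' i < c' j := by
    intro i j hij
    apply Finset.card_lt_card
    constructor
    · intro l hl
      simp only [Finset.mem_filter, Finset.mem_univ, true_and] at hl ⊢
      exact lt_trans hl hij
    · intro hsub
      have hi : i ∈ Finset.univ.filter fun l => key l < key j := by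
        simp [hij]
      have := hsub hi
      simp only [Finset.mem_filter, Finset.mem_univ, true_and] at this
      exact lt_irrefl _ this
  have hinj : Function.Injective c' := by
    intro i j h
    by_contra hne
    rcases lt_trichotomy (key i) (key j) with h1 | h1 | h1
    · exact absurd h (ne_of_lt (hmono _ _ h1))
    · exact hne (hkeyinj h1)
    · exact absurd h.symm (ne_of_lt (hmono _ _ h1))
  have hlt : ∀ j, c' j < N := by
    intro j
    have h1 : (Finset.univ.filter fun i => key i < key j) ⊆ Finset.univ.erase j := by
      intro l hl
      simp only [Finset.mem_filter, Finset.mem_univ, true_and] at hl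
      simp only [Finset.mem_erase, Finset.mem_univ, and_true]
      intro he; subst he; exact lt_irrefl _ hl
    have h2 := Finset.card_le_card h1
    rw [Finset.card_erase_of_mem (Finset.mem_univ j), Finset.card_univ, Fintype.card_fin] at h2
    have h3 : 0 < N := j.pos
    simp only [hc']
    omega
  have himg : Finset.univ.image c' = Finset.range N := by
    apply Finset.eq_of_subset_of_card_le
    · intro m hm
      simp only [Finset.mem_image] at hm
      obtain ⟨j, _, rfl⟩ := hm
      exact Finset.mem_range.mpr (hlt j)
    · rw [Finset.card_range, Finset.card_image_of_injective _ hinj, Finset.card_univ,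
        Fintype.card_fin]
  -- card of filter (c' j < k) = k
  have hcard : (Finset.univ.filter fun j : Fin N => c' j < k).card
      = ((Finset.range N).filter fun m => m < k).card := by
    apply Finset.card_nbij c'
    · intro j hj
      simp only [Finset.coe_filter, Finset.mem_filter, Finset.mem_univ, true_and, Set.mem_setOf_eq] at hj
      simp only [Finset.coe_filter, Finset.mem_filter, Finset.mem_range, Set.mem_setOf_eq]
      exact ⟨hlt j, hj⟩
    · exact fun a _ b _ h => hinj h
    · intro m hm
      simp only [Finset.coe_filter, Set.mem_setOf_eq, Finset.mem_range] at hm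
      have : m ∈ Finset.univ.image c' := himg ▸ Finset.mem_range.mpr hm.1
      simp only [Finset.mem_image] at this
      obtain ⟨j, _, rfl⟩ := this
      exact ⟨j, by simp [hm.2], rfl⟩
  have hrange : ((Finset.range N).filter fun m => m < k).card = k := by
    have : (Finset.range N).filter (fun m => m < k) = Finset.range k := by
      ext m
      simp only [Finset.mem_filter, Finset.mem_range]
      omega
    rw [this, Finset.card_range]
  have hsub : (Finset.univ.filter fun j : Fin N => c' j < k)
      ⊆ Finset.univ.filter fun j : Fin N =>
          (Finset.univ.filter fun i => w i < w j).card < k := by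
    intro j hj
    simp only [Finset.mem_filter, Finset.mem_univ, true_and] at hj ⊢
    refine lt_of_le_of_lt (Finset.card_le_card ?_) hj
    intro i hi
    simp only [Finset.mem_filter, Finset.mem_univ, true_and] at hi ⊢
    rw [hkey]
    exact Prod.Lex.lt_iff.mpr (Or.inl hi)
  calc k = (Finset.univ.filter fun j : Fin N => c' j < k).card := by rw [hcard, hrange]
    _ ≤ _ := Finset.card_le_card hsub

/-- Error-reweighted conformalized quantile regression validity
(Proposition 1, CQR-ERC case). -/
theorem erc_conformalized_quantile_regression_validity
    {Ω : Type*} [MeasurableSpace Ω] (P : Measure Ω) [IsProbabilityMeasure P]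
    (n : ℕ) (hn : 1 ≤ n)
    (L U Y : Fin (n + 1) → Ω → ℝ)
    (hL : ∀ i, Measurable (L i)) (hU : ∀ i, Measurable (U i))
    (hY : ∀ i, Measurable (Y i))
    (hLU : ∀ i, ∀ᵐ ω ∂P, L i ω < U i ω)
    (hexch : Exchangeable P (fun i ω => (L i ω, U i ω, Y i ω)))
    (V : Fin (n + 1) → Ω → ℝ)
    (hV : ∀ i ω, V i ω = max ((L i ω - Y i ω) / (U i ω - L i ω))
                             ((Y i ω - U i ω) / (U i ω - L i ω)))
    (α : ℝ) (hα : α ∈ Set.Ioo (0 : ℝ) 1)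
    (k : ℕ) (hk : k = ⌈((n : ℝ) + 1) * (1 - α)⌉₊) (hkn : k ≤ n)
    (d : Ω → ℝ)
    (hd : ∀ ω, d ω = orderStat (fun i : Fin n => V i.castSucc ω) k) :
    ENNReal.ofReal (1 - α) ≤
      P {ω | L (Fin.last n) ω - d ω * (U (Fin.last n) ω - L (Fin.last n) ω)
               ≤ Y (Fin.last n) ω ∧
             Y (Fin.last n) ω ≤
               U (Fin.last n) ω + d ω * (U (Fin.last n) ω - L (Fin.last n) ω)} := by
  classical
  obtain ⟨hα0, hα1⟩ := hα
  have hk1 : 1 ≤ k := by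
    rw [hk]
    have : (0:ℝ) < ((n:ℝ) + 1) * (1 - α) := by
      apply _root_.mul_pos (by positivity) (by linarith)
    exact Nat.ceil_pos.mpr this
  set g : ℝ × ℝ × ℝ → ℝ :=
    fun p => max ((p.1 - p.2.2) / (p.2.1 - p.1)) ((p.2.2 - p.2.1) / (p.2.1 - p.1)) with hgdef
  have hg : Measurable g := by
    apply Measurable.max
    · exact (measurable_fst.sub measurable_snd.snd).div (measurable_snd.fst.sub measurable_fst)
    · exact (measurable_snd.snd.sub measurable_snd.fst).div (measurable_snd.fst.sub measurable_fst)
  set W : Ω → (Fin (n + 1) → ℝ × ℝ × ℝ) := fun ω i => (L i ω, U i ω, Y i ω) with hWdef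
  have hW : Measurable W :=
    measurable_pi_lambda _ fun i => ((hL i).prod ((hU i).prod (hY i)))
  have hVg : ∀ i ω, V i ω = g (W ω i) := by
    intro i ω; rw [hV]
  set S : Fin (n + 1) → Set (Fin (n + 1) → ℝ × ℝ × ℝ) := fun j =>
    {z | (Finset.univ.filter fun i => g (z i) < g (z j)).card < k} with hSdef
  have hS : ∀ j, MeasurableSet (S j) := by
    intro j
    have hmc : Measurable fun z : Fin (n + 1) → ℝ × ℝ × ℝ =>
        (Finset.univ.filter fun i => g (z i) < g (z j)).card := by
      simp only [Finset.card_filter]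
      apply Finset.measurable_sum
      intro i _
      exact Measurable.ite
        (measurableSet_lt (hg.comp (measurable_pi_apply i)) (hg.comp (measurable_pi_apply j)))
        measurable_const measurable_const
    exact hmc (MeasurableSet.of_discrete (s := Set.Iio k))
  set A : Fin (n + 1) → Set Ω := fun j => W ⁻¹' S j with hAdef
  have hA : ∀ j, MeasurableSet (A j) := fun j => hW (hS j)
  -- equal probabilities via exchangeability
  have heq : ∀ j, P (A j) = P (A (Fin.last n)) := by
    intro j
    set σ : Equiv.Perm (Fin (n + 1)) := Equiv.swap j (Fin.last n) with hσ
    have h1 := hexch σ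
    have h2 : Measurable (fun ω (i : Fin (n + 1)) => (L (σ i) ω, U (σ i) ω, Y (σ i) ω)) :=
      measurable_pi_lambda _ fun i => ((hL _).prod ((hU _).prod (hY _)))
    have h3 := congrArg (fun μ : Measure (Fin (n+1) → ℝ × ℝ × ℝ) => μ (S (Fin.last n))) h1
    simp only at h3
    rw [Measure.map_apply h2 (hS _), Measure.map_apply hW (hS _)] at h3
    have h4 : (fun ω (i : Fin (n + 1)) => (L (σ i) ω, U (σ i) ω, Y (σ i) ω)) ⁻¹'
        S (Fin.last n) = A j := by
      ext ω
      simp only [Set.mem_preimage, hSdef, Set.mem_setOf_eq, hAdef]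
      have hc : (Finset.univ.filter fun i =>
            g (L (σ i) ω, U (σ i) ω, Y (σ i) ω) < g (L (σ (Fin.last n)) ω, U (σ (Fin.last n)) ω,
              Y (σ (Fin.last n)) ω)).card
          = (Finset.univ.filter fun i => g (W ω i) < g (W ω j)).card := by
        have hlast : σ (Fin.last n) = j := Equiv.swap_apply_right j (Fin.last n)
        rw [hlast]
        rw [Finset.card_filter, Finset.card_filter,
          ← Equiv.sum_comp σ (fun i => if g (W ω i) < g (W ω j) then (1:ℕ) else 0)]
      rw [hc]
    rw [h4] at h3
    exact h3
  -- sum lower bound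
  have hsum : (k : ℝ≥0∞) ≤ ∑ j : Fin (n + 1), P (A j) := by
    have hpt : ∀ ω, (k : ℝ≥0∞) ≤ ∑ j : Fin (n + 1),
        (A j).indicator (fun _ => (1 : ℝ≥0∞)) ω := by
      intro ω
      have hkc := key_count (fun i => V i ω) (show k ≤ n + 1 by omega)
      simp only [Set.indicator_apply]
      rw [Finset.sum_boole]
      have hAeq : ∀ j, (ω ∈ A j) ↔ (Finset.univ.filter fun i => V i ω < V j ω).card < k := by
        intro j
        simp only [hAdef, Set.mem_preimage, hSdef, Set.mem_setOf_eq, ← hVg]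
      calc (k : ℝ≥0∞) ≤ ((Finset.univ.filter fun j : Fin (n+1) =>
            (Finset.univ.filter fun i => V i ω < V j ω).card < k).card : ℝ≥0∞) := by
              exact_mod_cast hkc
        _ ≤ _ := by
              apply Nat.cast_le.mpr
              apply Finset.card_le_card
              intro j hj
              simp only [Finset.mem_filter, Finset.mem_univ, true_and] at hj ⊢
              exact (hAeq j).mpr hj
    calc (k : ℝ≥0∞) = ∫⁻ _, (k : ℝ≥0∞) ∂P := by rw [lintegral_const, measure_univ, mul_one]
      _ ≤ ∫⁻ ω, ∑ j : Fin (n + 1), (A j).indicator (fun _ => (1 : ℝ≥0∞)) ω ∂P :=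
          lintegral_mono hpt
      _ = ∑ j : Fin (n + 1), ∫⁻ ω, (A j).indicator (fun _ => (1 : ℝ≥0∞)) ω ∂P :=
          lintegral_finset_sum _ fun j _ => measurable_const.indicator (hA j)
      _ = ∑ j : Fin (n + 1), P (A j) := by
          apply Finset.sum_congr rfl
          intro j _
          rw [lintegral_indicator (hA j), setLIntegral_one]
  -- hence lower bound on P (A last)
  have hlast : ENNReal.ofReal (1 - α) ≤ P (A (Fin.last n)) := by
    have hsum2 : ∑ j : Fin (n + 1), P (A j) = (n + 1 : ℝ≥0∞) * P (A (Fin.last n)) := by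
      rw [Finset.sum_congr rfl fun j _ => heq j, Finset.sum_const, Finset.card_univ,
        Fintype.card_fin, nsmul_eq_mul]
      push_cast
      ring
    have hkr : ((n : ℝ) + 1) * (1 - α) ≤ (k : ℝ) := by
      rw [hk]; exact Nat.le_ceil _
    have h5 : (n + 1 : ℝ≥0∞) * ENNReal.ofReal (1 - α) ≤ (n + 1 : ℝ≥0∞) * P (A (Fin.last n)) := by
      calc (n + 1 : ℝ≥0∞) * ENNReal.ofReal (1 - α)
          = ENNReal.ofReal (((n : ℝ) + 1) * (1 - α)) := by
            rw [ENNReal.ofReal_mul (by positivity), ENNReal.ofReal_add (by positivity) zero_le_one,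
              ENNReal.ofReal_natCast, ENNReal.ofReal_one]
        _ ≤ ENNReal.ofReal (k : ℝ) := ENNReal.ofReal_le_ofReal hkr
        _ = (k : ℝ≥0∞) := ENNReal.ofReal_natCast k
        _ ≤ ∑ j : Fin (n + 1), P (A j) := hsum
        _ = (n + 1 : ℝ≥0∞) * P (A (Fin.last n)) := hsum2
    exact (ENNReal.mul_le_mul_iff_right (by simp) (by simp)).mp h5
  -- relate A last to the target event
  set G : Set Ω := {ω | L (Fin.last n) ω < U (Fin.last n) ω} with hGdef
  have hGc : P Gᶜ = 0 := by
    have := hLU (Fin.last n)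
    rw [ae_iff] at this
    exact this
  have hsub : A (Fin.last n) ∩ G ⊆
      {ω | L (Fin.last n) ω - d ω * (U (Fin.last n) ω - L (Fin.last n) ω)
               ≤ Y (Fin.last n) ω ∧
           Y (Fin.last n) ω ≤
               U (Fin.last n) ω + d ω * (U (Fin.last n) ω - L (Fin.last n) ω)} := by
    rintro ω ⟨hAω, hGω⟩
    simp only [hGdef, Set.mem_setOf_eq] at hGω
    have hpos : 0 < U (Fin.last n) ω - L (Fin.last n) ω := by linarith
    -- from hAω : card over Fin (n+1) < k
    have hcard : (Finset.univ.filter fun i : Fin (n+1) => V i ω < V (Fin.last n) ω).card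
        = (Finset.univ.filter fun i : Fin n => V i.castSucc ω < V (Fin.last n) ω).card := by
      rw [Finset.card_filter, Finset.card_filter, Fin.sum_univ_castSucc]
      simp
    have hAω' : (Finset.univ.filter fun i : Fin n =>
        V i.castSucc ω < V (Fin.last n) ω).card < k := by
      have h0 : ω ∈ A (Fin.last n) := hAω
      simp only [hAdef, Set.mem_preimage, hSdef, Set.mem_setOf_eq, ← hVg] at h0
      rw [hcard] at h0
      exact h0
    have hVd : V (Fin.last n) ω ≤ d ω := by
      rw [hd]
      by_contra hcon
      push_neg at hcon
      have := (orderStat_lt_iff (fun i : Fin n => V i.castSucc ω) hk1 hkn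
        (V (Fin.last n) ω)).mp hcon
      omega
    rw [hV] at hVd
    have h1 : (L (Fin.last n) ω - Y (Fin.last n) ω) / (U (Fin.last n) ω - L (Fin.last n) ω)
        ≤ d ω := le_trans (le_max_left _ _) hVd
    have h2 : (Y (Fin.last n) ω - U (Fin.last n) ω) / (U (Fin.last n) ω - L (Fin.last n) ω)
        ≤ d ω := le_trans (le_max_right _ _) hVd
    rw [div_le_iff₀ hpos] at h1 h2
    constructor <;> [nlinarith; nlinarith]
  calc ENNReal.ofReal (1 - α) ≤ P (A (Fin.last n)) := hlast
    _ ≤ P (A (Fin.last n) ∩ G) + P Gᶜ := by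
        refine le_trans (measure_mono ?_) (measure_union_le _ _)
        intro ω hω
        by_cases hg2 : ω ∈ G
        · exact Or.inl ⟨hω, hg2⟩
        · exact Or.inr hg2
    _ = P (A (Fin.last n) ∩ G) := by rw [hGc, add_zero]
    _ ≤ _ := measure_mono hsub
end

section
/- Exchangeable quantile lemma. Let n ≥ 1 and let V_1, …, V_{n+1} be exchangeable real-valued random variables on a probability space. For every k with 1 ≤ k ≤ n, letting V_(k) denote the k-th order statistic of V_1, …, V_n, it holds that P( V_{n+1} ≤ V_(k) ) ≥ k/(n+1). -/
open MeasureTheory Finset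

lemma aux_sorted_getElem_le {l : List ℝ} (hl : l.Pairwise (· ≤ ·)) {i j : ℕ}
    (hij : i ≤ j) (hj : j < l.length) :
    l[i]'(lt_of_le_of_lt hij hj) ≤ l[j] := by
  have := hl.rel_get_of_le (a := ⟨i, lt_of_le_of_lt hij hj⟩) (b := ⟨j, hj⟩) hij
  simpa using this

lemma aux_countP_le_iff_le_getD {l : List ℝ} (hl : l.Pairwise (· ≤ ·)) {t : ℝ} {m : ℕ}
    (hm : m < l.length) :
    l.countP (fun x => decide (x < t)) ≤ m ↔ t ≤ l.getD m 0 := by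
  rw [List.getD_eq_getElem l 0 hm]
  constructor
  · intro h
    by_contra hlt
    push_neg at hlt
    have hall : ∀ x ∈ l.take (m+1), (fun x => decide (x < t)) x = true := by
      intro x hx
      rw [List.mem_iff_getElem] at hx
      obtain ⟨i, hi, rfl⟩ := hx
      have hi' : i < m + 1 := lt_of_lt_of_le hi (by simp)
      rw [List.getElem_take]
      simp only [decide_eq_true_eq]
      exact lt_of_le_of_lt (aux_sorted_getElem_le hl (Nat.lt_succ_iff.mp hi') hm) hlt
    have htake := List.countP_eq_length.mpr hall
    have hlen : (l.take (m+1)).length = m + 1 := by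
      simp [Nat.succ_le_of_lt hm]
    have hcount : l.countP (fun x => decide (x < t)) =
        (l.take (m+1)).countP (fun x => decide (x < t))
          + (l.drop (m+1)).countP (fun x => decide (x < t)) := by
      conv_lhs => rw [← l.take_append_drop (m+1)]
      rw [List.countP_append]
    omega
  · intro h
    have hdrop : (l.drop m).countP (fun x => decide (x < t)) = 0 := by
      rw [List.countP_eq_zero]
      intro x hx
      rw [List.mem_iff_getElem] at hx
      obtain ⟨i, hi, rfl⟩ := hx
      have hmi : m + i < l.length := by
        have := hi; rw [List.length_drop] at this; omega
      have hrw : (l.drop m)[i] = l[m+i]'hmi := List.getElem_drop ..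
      rw [hrw]
      simp only [decide_eq_true_eq, not_lt]
      exact le_trans h (aux_sorted_getElem_le hl (Nat.le_add_right m i) hmi)
    have hcount : l.countP (fun x => decide (x < t)) =
        (l.take m).countP (fun x => decide (x < t))
          + (l.drop m).countP (fun x => decide (x < t)) := by
      conv_lhs => rw [← l.take_append_drop m]
      rw [List.countP_append]
    have hle : (l.take m).countP (fun x => decide (x < t)) ≤ m := by
      calc _ ≤ (l.take m).length := List.countP_le_length
        _ ≤ m := by simp
    omega

lemma aux_card_filter_eq_countP {n : ℕ} (v : Fin n → ℝ) (t : ℝ) :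
    ((Finset.univ.filter (fun i => v i < t)).card : ℕ)
      = (List.ofFn v).countP (fun x => decide (x < t)) := by
  rw [show (Finset.univ.filter (fun i => v i < t)).card
      = Multiset.card ((Finset.univ : Finset (Fin n)).val.filter (fun i => v i < t)) from rfl,
    Fin.univ_def]
  simp [List.countP_eq_length_filter, List.ofFn_eq_map, List.filter_map, Function.comp_def]

lemma aux_le_orderStat_iff {n : ℕ} (v : Fin n → ℝ) {k : ℕ} (hk1 : 1 ≤ k) (hkn : k ≤ n)
    (t : ℝ) :
    t ≤ orderStat v k ↔ (Finset.univ.filter (fun i => v i < t)).card ≤ k - 1 := by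
  have hl : (List.insertionSort (· ≤ ·) (List.ofFn v)).Pairwise (· ≤ ·) :=
    List.pairwise_insertionSort _ _
  have hperm := List.perm_insertionSort (· ≤ ·) (List.ofFn v)
  have hlen : (List.insertionSort (· ≤ ·) (List.ofFn v)).length = n := by
    rw [hperm.length_eq, List.length_ofFn]
  have hm : k - 1 < (List.insertionSort (· ≤ ·) (List.ofFn v)).length := by omega
  rw [orderStat, ← aux_countP_le_iff_le_getD hl hm, hperm.countP_eq,
    ← aux_card_filter_eq_countP]

lemma aux_card_rank_le {N : ℕ} (w : Fin N → ℝ) (m : ℕ) (hm : m < N) :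
    m + 1 ≤ (univ.filter (fun j => (univ.filter (fun i => w i < w j)).card ≤ m)).card := by
  let s := Tuple.sort w
  have hmono := Tuple.monotone_sort w
  have key : ∀ p : Fin N, (univ.filter (fun i => w i < w (s p))).card ≤ (p : ℕ) := by
    intro p
    have hsub : (univ.filter (fun i => w i < w (s p))) ⊆
        (univ.filter (fun q : Fin N => q < p)).image s := by
      intro i hi
      simp only [mem_filter, mem_univ, true_and] at hi
      rw [Finset.mem_image]
      refine ⟨s.symm i, ?_, by simp⟩
      simp only [mem_filter, mem_univ, true_and]
      by_contra hq
      push_neg at hq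
      have h2 := hmono hq
      simp only [Function.comp_apply, Equiv.apply_symm_apply] at h2
      exact absurd hi (not_lt.mpr (by simpa [s] using h2))
    calc (univ.filter (fun i => w i < w (s p))).card
        ≤ ((univ.filter (fun q : Fin N => q < p)).image s).card := Finset.card_le_card hsub
      _ ≤ (univ.filter (fun q : Fin N => q < p)).card := Finset.card_image_le
      _ = (p : ℕ) := by
          have he : (univ.filter (fun q : Fin N => q < p)) = Finset.Iio p := by
            ext q; simp
          rw [he, Fin.card_Iio]
  have hsub2 : (univ.filter (fun q : Fin N => q ≤ (⟨m, hm⟩ : Fin N))).image s ⊆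
      univ.filter (fun j => (univ.filter (fun i => w i < w j)).card ≤ m) := by
    intro j hj
    rw [Finset.mem_image] at hj
    obtain ⟨p, hp, rfl⟩ := hj
    simp only [mem_filter, mem_univ, true_and] at hp ⊢
    exact le_trans (key p) hp
  calc m + 1 = ((univ.filter (fun q : Fin N => q ≤ (⟨m, hm⟩ : Fin N))).image s).card := by
        rw [Finset.card_image_of_injective _ s.injective]
        have he : (univ.filter (fun q : Fin N => q ≤ (⟨m, hm⟩ : Fin N))) = Finset.Iic ⟨m, hm⟩ := by
          ext q; simp
        rw [he, Fin.card_Iic]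
    _ ≤ _ := Finset.card_le_card hsub2

lemma aux_g_comp_perm {N : ℕ} (w : Fin N → ℝ) (σ : Equiv.Perm (Fin N)) (j : Fin N) :
    (univ.filter (fun i => w (σ i) < w (σ j))).card
      = (univ.filter (fun i => w i < w (σ j))).card := by
  have he : (univ.filter (fun i => w (σ i) < w (σ j)))
      = (univ.filter (fun i => w i < w (σ j))).map σ.symm.toEmbedding := by
    ext i
    simp only [mem_filter, mem_univ, true_and, Finset.mem_map, Equiv.coe_toEmbedding]
    constructor
    · intro hi
      exact ⟨σ i, hi, by simp⟩
    · rintro ⟨i', hi', rfl⟩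
      simpa using hi'
  rw [he, Finset.card_map]

lemma aux_g_last {n : ℕ} (w : Fin (n+1) → ℝ) :
    (univ.filter (fun i : Fin (n+1) => w i < w (Fin.last n))).card
      = (univ.filter (fun i : Fin n => w i.castSucc < w (Fin.last n))).card := by
  have he : (univ.filter (fun i : Fin (n+1) => w i < w (Fin.last n)))
      = (univ.filter (fun i : Fin n => w i.castSucc < w (Fin.last n))).map
          Fin.castSuccEmb := by
    ext i
    simp only [mem_filter, mem_univ, true_and, Finset.mem_map, Fin.coe_castSuccEmb]
    constructor
    · intro hi
      have hne : i ≠ Fin.last n := by rintro rfl; exact lt_irrefl _ hi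
      obtain ⟨i', rfl⟩ := Fin.exists_castSucc_eq.mpr hne
      exact ⟨i', hi, rfl⟩
    · rintro ⟨i', hi', rfl⟩
      exact hi'
  rw [he, Finset.card_map]

/-- Exchangeable quantile lemma: the probability that the last of `n + 1`
exchangeable variables is at most the `k`-th order statistic of the first `n`
is at least `k / (n + 1)`. -/
theorem exchangeable_quantile_lemma
    {Ω : Type*} [MeasurableSpace Ω] (P : Measure Ω) [IsProbabilityMeasure P]
    (n : ℕ) (hn : 1 ≤ n)
    (V : Fin (n + 1) → Ω → ℝ)
    (hmeas : ∀ i, Measurable (V i))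
    (hexch : Exchangeable P V)
    (k : ℕ) (hk1 : 1 ≤ k) (hkn : k ≤ n) :
    ENNReal.ofReal ((k : ℝ) / ((n : ℝ) + 1)) ≤
      P {ω | V (Fin.last n) ω ≤ orderStat (fun i : Fin n => V i.castSucc ω) k} := by
  classical
  set W : Ω → (Fin (n+1) → ℝ) := fun ω i => V i ω with hW_def
  have hW : Measurable W := measurable_pi_lambda _ hmeas
  set g : Fin (n+1) → (Fin (n+1) → ℝ) → ℕ :=
    fun j w => (univ.filter (fun i => w i < w j)).card with hg_def
  have hg : ∀ j, Measurable (g j) := by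
    intro j
    have : g j = fun w => ∑ i : Fin (n+1), if w i < w j then 1 else 0 := by
      funext w
      exact Finset.card_filter _ _
    rw [this]
    exact Finset.measurable_sum _ (fun i _ =>
      Measurable.ite (measurableSet_lt (measurable_pi_apply i) (measurable_pi_apply j))
        measurable_const measurable_const)
  set C : Fin (n+1) → Set (Fin (n+1) → ℝ) := fun j => {w | g j w ≤ k - 1} with hC_def
  have hC : ∀ j, MeasurableSet (C j) := fun j => (hg j) (by trivial : MeasurableSet {x : ℕ | x ≤ k - 1})
  set B : Fin (n+1) → Set Ω := fun j => W ⁻¹' (C j) with hB_def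
  have hB : ∀ j, MeasurableSet (B j) := fun j => hW (hC j)
  -- equal probabilities
  have hPB : ∀ j, P (B j) = P (B (Fin.last n)) := by
    intro j
    have hσ := hexch (Equiv.swap j (Fin.last n))
    set σ := Equiv.swap j (Fin.last n) with hσ_def
    have hW' : Measurable (fun ω (i : Fin (n+1)) => V (σ i) ω) :=
      measurable_pi_lambda _ (fun i => hmeas (σ i))
    have h1 : P (B j) = Measure.map W P (C j) := by
      rw [Measure.map_apply hW (hC j)]
    have h2 : Measure.map W P (C j)
        = P ((fun ω (i : Fin (n+1)) => V (σ i) ω) ⁻¹' (C j)) := by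
      rw [← hσ, Measure.map_apply hW' (hC j)]
    have h3 : ((fun ω (i : Fin (n+1)) => V (σ i) ω) ⁻¹' (C j)) = B (Fin.last n) := by
      ext ω
      show g j (fun i => V (σ i) ω) ≤ k - 1 ↔ g (Fin.last n) (W ω) ≤ k - 1
      have hgc : g j (fun i => V (σ i) ω) = g (σ j) (W ω) := aux_g_comp_perm (W ω) σ j
      rw [hgc, Equiv.swap_apply_left]
    rw [h1, h2, h3]
  -- pointwise sum of indicators
  have hpt : ∀ ω, (k : ENNReal) ≤ ∑ j : Fin (n+1), (B j).indicator (fun _ => (1:ENNReal)) ω := by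
    intro ω
    have hsum : ∑ j : Fin (n+1), (B j).indicator (fun _ => (1:ENNReal)) ω
        = ((univ.filter (fun j : Fin (n+1) => g j (W ω) ≤ k - 1)).card : ENNReal) := by
      rw [Finset.card_filter]
      push_cast
      apply Finset.sum_congr rfl
      intro j _
      by_cases h : ω ∈ B j
      · have h' : g j (W ω) ≤ k - 1 := h
        simp [Set.indicator_of_mem h, h']
      · have h' : ¬ g j (W ω) ≤ k - 1 := h
        simp [Set.indicator_of_notMem h, h']
    rw [hsum]
    have hcard := aux_card_rank_le (W ω) (k - 1) (by omega)
    have : k ≤ (univ.filter (fun j : Fin (n+1) => g j (W ω) ≤ k - 1)).card := by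
      have : k - 1 + 1 = k := by omega
      rw [← this]
      exact hcard
    exact_mod_cast Nat.cast_le.mpr this
  -- integrate
  have hInt : (k : ENNReal) ≤ (n + 1 : ℕ) * P (B (Fin.last n)) := by
    have h1 : (k : ENNReal) = ∫⁻ _, (k : ENNReal) ∂P := by
      rw [lintegral_const, measure_univ, mul_one]
    have h2 : (∫⁻ ω, (k : ENNReal) ∂P)
        ≤ ∫⁻ ω, ∑ j : Fin (n+1), (B j).indicator (fun _ => (1:ENNReal)) ω ∂P :=
      lintegral_mono hpt
    have h3 : (∫⁻ ω, ∑ j : Fin (n+1), (B j).indicator (fun _ => (1:ENNReal)) ω ∂P)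
        = ∑ j : Fin (n+1), P (B j) := by
      rw [lintegral_finset_sum]
      · apply Finset.sum_congr rfl
        intro j _
        rw [lintegral_indicator (hB j)]
        simp
      · exact fun j _ => measurable_const.indicator (hB j)
    have h4 : ∑ j : Fin (n+1), P (B j) = (n + 1 : ℕ) * P (B (Fin.last n)) := by
      rw [Finset.sum_congr rfl (fun j _ => hPB j), Finset.sum_const, Finset.card_univ,
        Fintype.card_fin, nsmul_eq_mul]
    calc (k : ENNReal) = ∫⁻ _, (k : ENNReal) ∂P := h1
      _ ≤ _ := h2
      _ = ∑ j : Fin (n+1), P (B j) := h3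
      _ = (n + 1 : ℕ) * P (B (Fin.last n)) := h4
  -- identify target set
  have hset : {ω | V (Fin.last n) ω ≤ orderStat (fun i : Fin n => V i.castSucc ω) k}
      = B (Fin.last n) := by
    ext ω
    simp only [hB_def, hC_def, Set.mem_preimage, Set.mem_setOf_eq, hg_def]
    rw [aux_le_orderStat_iff _ hk1 hkn]
    constructor
    · intro h
      rw [aux_g_last]
      exact h
    · intro h
      rw [aux_g_last] at h
      exact h
  rw [hset]
  -- final arithmetic
  have hfin : ENNReal.ofReal ((k : ℝ) / ((n : ℝ) + 1)) = (k : ENNReal) / ((n : ENNReal) + 1) := by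
    rw [ENNReal.ofReal_div_of_pos (by positivity)]
    congr 1
    · exact ENNReal.ofReal_natCast k
    · rw [show ((n : ℝ) + 1) = ((n + 1 : ℕ) : ℝ) by push_cast; ring,
        ENNReal.ofReal_natCast]
      push_cast
      ring
  rw [hfin]
  rw [ENNReal.div_le_iff (by simp) (by simp)]
  calc (k : ENNReal) ≤ (n + 1 : ℕ) * P (B (Fin.last n)) := hInt
    _ = P (B (Fin.last n)) * ((n : ENNReal) + 1) := by push_cast; ring
end
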